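/- arXiv:1005.0336 — 3 statements merged into one kernel-verified Lean document; each statement's English description precedes it below -/
import Mathlib

section
/- Let h_n(x) = a(x−x_1)⋯(x−x_n) and g_n(x) = b(x−ζ_1)⋯(x−ζ_n) be real polynomials with real and simple zeros, where a, b > 0, and suppose the zeros interlace as ζ_1 < x_1 < ζ_2 < x_2 < ⋯ < ζ_n < x_n. Then for every real constant c > 0 the polynomial f(x) = h_n(x) + c·g_n(x) has n real simple zeros η_1 < ⋯ < η_n satisfying ζ_1 < η_1 < x_1 < ζ_2 < η_2 < x_2 < ⋯ < ζ_n < η_n < x_n. Moreover each η_k = η_k(c) is a strictly decreasing function of c, and for each k = 1,…,n one has lim_{c→∞} η_k(c) = ζ_k and lim_{c→∞} c·[η_k(c) − ζ_k] = −h_n(ζ_k)/g_n′(ζ_k). -/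
/-!
At `ζ k` only `h` survives in `f_c = h + c g`, at `x k` only `c g`, and counting the negative
factors of the two products shows that `f_c` changes sign on every `(ζ k, x k)`. This gives `n`
roots `η_k(c)`, hence all of them, and the factorisation `f_c = (a + c b) ∏ (X - η_k(c))`.
On `(ζ k, x k)` the sign `s` of `g` is constant and, by the factorisation, `s f_c(t)` has the sign
of `t - η_k(c)`. As `s f_c(t)` increases with `c`, `η_k(c)` decreases; as it tends to `+∞` for each
fixed `t > ζ k`, `η_k(c) → ζ k`. Finally `g = (X - ζ k) q` with `q(ζ k) = g'(ζ k) ≠ 0`, and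
`f_c(η_k) = 0` reads `c (η_k - ζ k) = -h(η_k) / q(η_k) → -h(ζ k) / g'(ζ k)`.
-/

open Polynomial Filter Topology Finset Lagrange

/-- `Interlacing n u v` encodes the chain `u 0 < v 0 < u 1 < v 1 < ⋯ < u (n-1) < v (n-1)`. -/
def Interlacing {α : Type*} [Preorder α] (n : ℕ) (u v : ℕ → α) : Prop :=
  (∀ k < n, u k < v k) ∧ ∀ k, k + 1 < n → v k < u (k + 1)

namespace Interlacing

variable {α : Type*} [Preorder α] {n : ℕ} {u v w : ℕ → α}

theorem right_lt_left (H : Interlacing n u v) {i j : ℕ} (hij : i < j) (hj : j < n) :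
    v i < u j := by
  induction j, hij using Nat.le_induction with
  | base => exact H.2 i hj
  | succ j hij ih => exact (ih (by omega)).trans ((H.1 j (by omega)).trans (H.2 j hj))

theorem left_lt_right (H : Interlacing n u v) {i j : ℕ} (hij : i ≤ j) (hj : j < n) :
    u i < v j := by
  rcases hij.eq_or_lt with rfl | hij
  · exact H.1 i hj
  · exact (H.1 i (hij.trans hj)).trans ((H.right_lt_left hij hj).trans (H.1 j hj))

theorem strictMonoOn_left (H : Interlacing n u v) : StrictMonoOn u (Set.Iio n) :=
  fun i _ _ hj hij => (H.1 i (hij.trans hj)).trans (H.right_lt_left hij hj)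

theorem of_mem_Ioo (H : Interlacing n u v) (hw : ∀ k < n, w k ∈ Set.Ioo (u k) (v k)) :
    Interlacing n u w ∧ Interlacing n w v :=
  ⟨⟨fun k hk => (hw k hk).1, fun k hk => (hw k (by omega)).2.trans (H.2 k hk)⟩,
    ⟨fun k hk => (hw k hk).2, fun k hk => (H.2 k hk).trans (hw (k + 1) hk).1⟩⟩

end Interlacing

theorem Interlacing.injOn_left {α : Type*} [LinearOrder α] {n : ℕ} {u v : ℕ → α}
    (H : Interlacing n u v) : Set.InjOn u (range n) := by
  rw [coe_range]
  exact H.strictMonoOn_left.injOn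

section Sign

variable {R : Type*} [CommRing R] [LinearOrder R] [IsStrictOrderedRing R]

theorem neg_one_pow_mul_prod_sub_pos {n k : ℕ} (hk : k ≤ n) {y : ℕ → R} {t : R}
    (hlt : ∀ j < k, y j < t) (hgt : ∀ j, k ≤ j → j < n → t < y j) :
    0 < (-1) ^ (n - k) * ∏ j ∈ range n, (t - y j) := by
  have hflip : (-1) ^ (n - k) * ∏ j ∈ Ico k n, (t - y j) = ∏ j ∈ Ico k n, (y j - t) := by
    rw [← Nat.card_Ico k n, ← prod_const, ← prod_mul_distrib]
    exact prod_congr rfl fun _ _ => by ring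
  rw [← prod_range_mul_prod_Ico _ hk, mul_left_comm, hflip]
  refine mul_pos (prod_pos fun j hj => sub_pos.2 (hlt j (mem_range.1 hj)))
    (prod_pos fun j hj => sub_pos.2 ?_)
  exact hgt j (mem_Ico.1 hj).1 (mem_Ico.1 hj).2

theorem sign_neg_one_pow_mul_prod_sub {n k : ℕ} (hk : k < n) {y : ℕ → R} {t : R}
    (hlt : ∀ j < k, y j < t) (hgt : ∀ j, k < j → j < n → t < y j) :
    SignType.sign ((-1) ^ (n - (k + 1)) * ∏ j ∈ range n, (t - y j)) = SignType.sign (t - y k) := by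
  rcases lt_trichotomy t (y k) with htk | rfl | htk
  · have hpos := neg_one_pow_mul_prod_sub_pos hk.le hlt fun j hkj hjn =>
      hkj.eq_or_lt.elim (fun e => e ▸ htk) (hgt j · hjn)
    rw [show n - k = n - (k + 1) + 1 by omega, pow_succ] at hpos
    rw [sign_neg (sub_neg.2 htk), sign_neg (by linarith)]
  · simp [prod_eq_zero (mem_range.2 hk)]
  · have hpos := neg_one_pow_mul_prod_sub_pos hk (fun j hj =>
      (Nat.lt_succ_iff_lt_or_eq.1 hj).elim (hlt j) fun e => e ▸ htk) fun j hkj hjn => hgt j hkj hjn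
    rw [sign_pos (sub_pos.2 htk), sign_pos hpos]

namespace Interlacing

variable {n k : ℕ} {u v w : ℕ → R} {t : R}

theorem neg_one_pow_mul_eval_nodal_right_pos (H : Interlacing n u v) (hk : k < n) :
    0 < (-1) ^ (n - k) * (nodal (range n) v).eval (u k) := by
  rw [eval_nodal]
  exact neg_one_pow_mul_prod_sub_pos hk.le (fun _ hj => H.right_lt_left hj hk)
    fun _ hkj hjn => H.left_lt_right hkj hjn

theorem neg_one_pow_mul_eval_nodal_left_pos (H : Interlacing n u v) (hk : k < n)
    (ht : t ∈ Set.Ioc (u k) (v k)) :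
    0 < (-1) ^ (n - (k + 1)) * (nodal (range n) u).eval t := by
  rw [eval_nodal]
  refine neg_one_pow_mul_prod_sub_pos hk (fun j hj => ?_)
    fun _ hkj hjn => ht.2.trans_lt (H.right_lt_left hkj hjn)
  exact (H.strictMonoOn_left.monotoneOn (hj.trans_le hk) hk (Nat.le_of_lt_succ hj)).trans_lt ht.1

theorem sign_neg_one_pow_mul_eval_nodal (H₁ : Interlacing n u w) (H₂ : Interlacing n w v)
    (hk : k < n) (ht : t ∈ Set.Ioo (u k) (v k)) :
    SignType.sign ((-1) ^ (n - (k + 1)) * (nodal (range n) w).eval t) =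
      SignType.sign (t - w k) := by
  rw [eval_nodal]
  exact sign_neg_one_pow_mul_prod_sub hk (fun _ hj => (H₁.right_lt_left hj hk).trans ht.1)
    fun _ hkj hjn => ht.2.trans (H₂.right_lt_left hkj hjn)

end Interlacing

end Sign

theorem coeff_card_nodal {R ι : Type*} [CommRing R] [Nontrivial R] (s : Finset ι) (v : ι → R) :
    (nodal s v).coeff #s = 1 := by
  rw [← natDegree_nodal (s := s) (v := v)]
  exact nodal_monic.coeff_natDegree

theorem eq_C_coeff_mul_nodal_of_isRoot {R ι : Type*} [CommRing R] [IsDomain R] {s : Finset ι}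
    {v : ι → R} (hv : Set.InjOn v s) {p : R[X]} (hp : p.degree ≤ #s)
    (hroot : ∀ i ∈ s, p.IsRoot (v i)) : p = C (p.coeff #s) * nodal s v := by
  refine eq_of_degree_sub_lt_of_eval_index_eq s hv ?_ fun i hi => ?_
  · have hq : (C (p.coeff #s) * nodal s v).degree ≤ #s := by
      rw [← smul_eq_C_mul]
      exact (degree_smul_le _ _).trans degree_nodal.le
    rw [degree_lt_iff_coeff_zero]
    intro m hm
    rcases hm.eq_or_lt with rfl | hm
    · rw [coeff_sub, coeff_C_mul, coeff_card_nodal, mul_one, sub_self]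
    · rw [coeff_sub, coeff_eq_zero_of_degree_lt (hp.trans_lt (by exact_mod_cast hm)),
        coeff_eq_zero_of_degree_lt (hq.trans_lt (by exact_mod_cast hm)), sub_zero]
  · rw [(hroot i hi).eq_zero, eval_mul, eval_nodal_at_node hi, mul_zero]

section Pencil

variable {φ ψ η : ℝ → ℝ} {l r : ℝ}

theorem strictAntiOn_of_sign_add_mul_eq (hψ : ∀ t ∈ Set.Ioo l r, 0 < ψ t)
    (hη : ∀ c > 0, η c ∈ Set.Ioo l r)
    (hsign : ∀ c > 0, ∀ t ∈ Set.Ioo l r, SignType.sign (φ t + c * ψ t) = SignType.sign (t - η c)) :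
    StrictAntiOn η (Set.Ioi 0) := by
  intro c₁ hc₁ c₂ hc₂ hlt
  have hzero : φ (η c₂) + c₂ * ψ (η c₂) = 0 := by
    simpa using hsign c₂ hc₂ _ (hη c₂ hc₂)
  have hneg : φ (η c₂) + c₁ * ψ (η c₂) < 0 := by nlinarith [hψ _ (hη c₂ hc₂)]
  have := hsign c₁ hc₁ _ (hη c₂ hc₂)
  rw [sign_neg hneg, eq_comm, sign_eq_neg_one_iff, sub_neg] at this
  exact this

theorem tendsto_of_sign_add_mul_eq (hψ : ∀ t ∈ Set.Ioo l r, 0 < ψ t)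
    (hη : ∀ c > 0, η c ∈ Set.Ioo l r)
    (hsign : ∀ c > 0, ∀ t ∈ Set.Ioo l r, SignType.sign (φ t + c * ψ t) = SignType.sign (t - η c)) :
    Tendsto η atTop (𝓝 l) := by
  refine tendsto_order.2 ⟨fun l' hl' => ?_, fun u hu => ?_⟩
  · filter_upwards [eventually_gt_atTop 0] with c hc using hl'.trans (hη c hc).1
  · obtain ⟨t, hlt, htu⟩ := exists_between (lt_min hu ((hη 1 one_pos).1.trans (hη 1 one_pos).2))
    have ht : t ∈ Set.Ioo l r := ⟨hlt, htu.trans_le (min_le_right _ _)⟩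
    have hgrow : Tendsto (fun c => φ t + c * ψ t) atTop atTop :=
      tendsto_atTop_add_const_left _ _ (tendsto_id.atTop_mul_const (hψ t ht))
    filter_upwards [hgrow.eventually_gt_atTop 0, eventually_gt_atTop 0] with c hpos hc
    have := hsign c hc t ht
    rw [sign_pos hpos, eq_comm, sign_eq_one_iff, sub_pos] at this
    exact this.trans (htu.trans_le (min_le_left _ _))

end Pencil

theorem tendsto_mul_sub_of_eval_add_C_mul_eq_zero {h g : ℝ[X]} {z : ℝ} {η : ℝ → ℝ}
    (hgz : g.IsRoot z) (hg' : (derivative g).eval z ≠ 0) (hη : Tendsto η atTop (𝓝 z))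
    (hroot : ∀ᶠ c in atTop, (h + C c * g).eval (η c) = 0) :
    Tendsto (fun c => c * (η c - z)) atTop (𝓝 (-h.eval z / (derivative g).eval z)) := by
  set q := g /ₘ (X - C z)
  have hgq : g = (X - C z) * q := (mul_divByMonic_eq_iff_isRoot.2 hgz).symm
  have hq : (derivative g).eval z = q.eval z := by
    have := divByMonic_add_X_sub_C_mul_derivative_divByMonic_eq_derivative g z
    simpa using (congrArg (eval z) this).symm
  rw [hq] at hg' ⊢
  have hlim : Tendsto (fun c => -h.eval (η c) / q.eval (η c)) atTop (𝓝 (-h.eval z / q.eval z)) :=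
    ((h.continuous.neg.tendsto z).div (q.continuous.tendsto z) hg').comp hη
  refine hlim.congr' ?_
  filter_upwards [hroot, hη.eventually (q.continuous.continuousAt.eventually_ne hg')] with c hc hqc
  rw [hgq] at hc
  simp only [eval_add, eval_mul, eval_C, eval_sub, eval_X] at hc
  rw [div_eq_iff hqc]
  linear_combination -hc

theorem eval_derivative_nodal_ne_zero {F ι : Type*} [Field F] {s : Finset ι} {v : ι → F}
    (hv : Set.InjOn v s) {i : ι} (hi : i ∈ s) : (derivative (nodal s v)).eval (v i) ≠ 0 := by
  classical
  intro h0
  exact nodalWeight_ne_zero hv hi (by rw [nodalWeight_eq_eval_derivative_nodal hi, h0, inv_zero])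

namespace Interlacing

variable {n k : ℕ} {a b c : ℝ} {x ζ : ℕ → ℝ}

theorem exists_isRoot_add_C_mul (H : Interlacing n ζ x) (ha : 0 < a) (hb : 0 < b) (hc : 0 < c)
    (hk : k < n) : ∃ t ∈ Set.Ioo (ζ k) (x k),
      (C a * nodal (range n) x + C c * (C b * nodal (range n) ζ)).IsRoot t := by
  set f := C a * nodal (range n) x + C c * (C b * nodal (range n) ζ)
  have hleft : 0 < (-1) ^ (n - k) * f.eval (ζ k) := by
    have := H.neg_one_pow_mul_eval_nodal_right_pos hk
    simp only [f, eval_add, eval_mul, eval_C, eval_nodal_at_node (mem_range.2 hk)]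
    nlinarith
  have hright : (-1) ^ (n - k) * f.eval (x k) < 0 := by
    have := H.neg_one_pow_mul_eval_nodal_left_pos hk ⟨H.1 k hk, le_rfl⟩
    rw [show n - k = n - (k + 1) + 1 by omega, pow_succ]
    simp only [f, eval_add, eval_mul, eval_C, eval_nodal_at_node (mem_range.2 hk)]
    have hcb : 0 < c * b := mul_pos hc hb
    nlinarith
  obtain ⟨t, ht, hft⟩ := intermediate_value_Ioo' (H.1 k hk).le
    (continuous_const.mul f.continuous).continuousOn ⟨hright, hleft⟩
  exact ⟨t, ht, (mul_eq_zero.1 hft).resolve_left (pow_ne_zero _ (by norm_num))⟩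

theorem exists_add_C_mul_eq_C_mul_nodal (H : Interlacing n ζ x) (ha : 0 < a) (hb : 0 < b)
    (hc : 0 < c) : ∃ η : ℕ → ℝ,
      C a * nodal (range n) x + C c * (C b * nodal (range n) ζ) =
        C (a + c * b) * nodal (range n) η ∧
      ∀ k < n, η k ∈ Set.Ioo (ζ k) (x k) := by
  choose! η hmem hroot using fun k (hk : k < n) => H.exists_isRoot_add_C_mul ha hb hc hk
  refine ⟨η, ?_, hmem⟩
  have hdeg : (C a * nodal (range n) x + C c * (C b * nodal (range n) ζ)).degree ≤ #(range n) := by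
    simp only [← smul_eq_C_mul, smul_smul]
    exact (degree_add_le _ _).trans (max_le ((degree_smul_le _ _).trans degree_nodal.le)
      ((degree_smul_le _ _).trans degree_nodal.le))
  rw [eq_C_coeff_mul_nodal_of_isRoot (H.of_mem_Ioo hmem).2.injOn_left hdeg
    fun k hk => hroot k (mem_range.1 hk)]
  simp only [coeff_add, coeff_C_mul, card_range]
  have hx : (nodal (range n) x).coeff n = 1 := by simpa using coeff_card_nodal (range n) x
  have hζ : (nodal (range n) ζ).coeff n = 1 := by simpa using coeff_card_nodal (range n) ζ
  rw [hx, hζ, mul_one, mul_one]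

end Interlacing

theorem stmt_0_general (n : ℕ) (a b : ℝ) (ha : 0 < a) (hb : 0 < b)
    (x ζ : ℕ → ℝ) (h g : Polynomial ℝ)
    (hh : h = C a * ∏ k ∈ Finset.range n, (X - C (x k)))
    (hg : g = C b * ∏ k ∈ Finset.range n, (X - C (ζ k)))
    (hint1 : ∀ k < n, ζ k < x k)
    (hint2 : ∀ k, k + 1 < n → x k < ζ (k + 1)) :
    ∃ η : ℝ → ℕ → ℝ,
      (∀ c : ℝ, 0 < c →
        (h + C c * g = C (a + c * b) * ∏ k ∈ Finset.range n, (X - C (η c k))) ∧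
        (∀ k < n, ζ k < η c k ∧ η c k < x k) ∧
        (∀ k, k + 1 < n → η c k < η c (k + 1))) ∧
      (∀ k < n, StrictAntiOn (fun c => η c k) (Set.Ioi (0 : ℝ))) ∧
      (∀ k < n, Tendsto (fun c => η c k) atTop (𝓝 (ζ k))) ∧
      (∀ k < n, Tendsto (fun c => c * (η c k - ζ k)) atTop
        (𝓝 (-(h.eval (ζ k)) / (derivative g).eval (ζ k)))) := by
  rw [← nodal_eq] at hh hg
  subst hh hg
  have H : Interlacing n ζ x := ⟨hint1, hint2⟩
  choose! η hfact hmem using fun c (hc : 0 < c) => H.exists_add_C_mul_eq_C_mul_nodal ha hb hc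
  have hroots c (hc : 0 < c) := H.of_mem_Ioo (hmem c hc)
  have hψ : ∀ k < n, ∀ t ∈ Set.Ioo (ζ k) (x k),
      0 < (-1) ^ (n - (k + 1)) * (C b * nodal (range n) ζ).eval t := fun k hk t ht => by
    rw [eval_mul, eval_C, mul_left_comm]
    exact mul_pos hb (H.neg_one_pow_mul_eval_nodal_left_pos hk (Set.Ioo_subset_Ioc_self ht))
  have hsign : ∀ k < n, ∀ c > 0, ∀ t ∈ Set.Ioo (ζ k) (x k),
      SignType.sign ((-1) ^ (n - (k + 1)) * (C a * nodal (range n) x).eval t +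
        c * ((-1) ^ (n - (k + 1)) * (C b * nodal (range n) ζ).eval t)) =
      SignType.sign (t - η c k) := fun k hk c hc t ht => by
    rw [mul_left_comm c, ← mul_add, ← eval_C_mul, ← eval_add, hfact c hc, eval_C_mul,
      mul_left_comm, sign_mul, sign_pos (by positivity), one_mul]
    exact (hroots c hc).1.sign_neg_one_pow_mul_eval_nodal (hroots c hc).2 hk ht
  have hlim k (hk : k < n) : Tendsto (fun c => η c k) atTop (𝓝 (ζ k)) :=
    tendsto_of_sign_add_mul_eq (hψ k hk) (fun c hc => hmem c hc k hk) (hsign k hk)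
  refine ⟨η, fun c hc => ⟨hfact c hc, hmem c hc, fun k hk => ?_⟩, fun k hk =>
    strictAntiOn_of_sign_add_mul_eq (hψ k hk) (fun c hc => hmem c hc k hk) (hsign k hk), hlim,
    fun k hk => tendsto_mul_sub_of_eval_add_C_mul_eq_zero ?_ ?_ (hlim k hk) ?_⟩
  · exact ((hroots c hc).2.1 k (by omega)).trans ((hroots c hc).2.2 k hk)
  · simp [eval_nodal_at_node (mem_range.2 hk)]
  · rw [derivative_C_mul, eval_mul, eval_C]
    exact mul_ne_zero hb.ne' (eval_derivative_nodal_ne_zero H.injOn_left (mem_range.2 hk))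
  · filter_upwards [eventually_gt_atTop 0] with c hc
    rw [hfact c hc, eval_mul, eval_nodal_at_node (mem_range.2 hk), mul_zero]

/-- Zeros of `f = h + c·g` when the zeros of `g` interlace those of `h`
from the left: `ζ₁ < x₁ < ζ₂ < x₂ < ⋯ < ζₙ < xₙ`.  For every `c > 0` the polynomial
`f` factors with `n` real simple zeros `η_k(c)` satisfying
`ζ_k < η_k(c) < x_k`; each `η_k` is strictly decreasing in `c`,
`η_k(c) → ζ_k` as `c → ∞`, and `c·(η_k(c) − ζ_k) → −h(ζ_k)/g'(ζ_k)`. -/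
theorem stmt_0 (n : ℕ) (hn : 0 < n) (a b : ℝ) (ha : 0 < a) (hb : 0 < b)
    (x ζ : ℕ → ℝ) (h g : Polynomial ℝ)
    (hh : h = C a * ∏ k ∈ Finset.range n, (X - C (x k)))
    (hg : g = C b * ∏ k ∈ Finset.range n, (X - C (ζ k)))
    (hint1 : ∀ k < n, ζ k < x k)
    (hint2 : ∀ k, k + 1 < n → x k < ζ (k + 1)) :
    ∃ η : ℝ → ℕ → ℝ,
      (∀ c : ℝ, 0 < c →
        (h + C c * g = C (a + c * b) * ∏ k ∈ Finset.range n, (X - C (η c k))) ∧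
        (∀ k < n, ζ k < η c k ∧ η c k < x k) ∧
        (∀ k, k + 1 < n → η c k < η c (k + 1))) ∧
      (∀ k < n, StrictAntiOn (fun c => η c k) (Set.Ioi (0 : ℝ))) ∧
      (∀ k < n, Tendsto (fun c => η c k) atTop (𝓝 (ζ k))) ∧
      (∀ k < n, Tendsto (fun c => c * (η c k - ζ k)) atTop
        (𝓝 (-(h.eval (ζ k)) / (derivative g).eval (ζ k)))) :=
  stmt_0_general n a b ha hb x ζ h g hh hg hint1 hint2
end

section
/- Fix n and suppose: (1) p_n^N(a;x) = p_n*(a;x) + c_n·p_{n−1}*(a;x) for a constant c_n ≠ 0; (2) the polynomials p_k*(a;·) satisfy the three-term recurrence x·p_{n−1}*(a;x) = p_n*(a;x) + β*_{n−1}·p_{n−1}*(a;x) + γ*_{n−1}·p_{n−2}*(a;x) with γ*_{n−1} ≠ 0; (3) the structure relations φ(x)·(p_k*(a;x))′ = A(x,k)·p_k*(a;x) + B(x,k)·p_{k−1}*(a;x) hold for k = n and k = n−1, where φ, A(·,k), B(·,k) are polynomials. Define A*(x,n) = A(x,n) − (c_n/γ*_{n−1})·B(x,n−1) and B*(x,n)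 = B(x,n) + c_n·A(x,n−1) + (c_n/γ*_{n−1})·(x−β*_{n−1})·B(x,n−1). Then, on the set where B*(x,n) − c_n·A*(x,n) ≠ 0, the function y = p_n^N(a;x) satisfies the second-order linear differential equation 𝒜(x;n)·y″ + ℬ(x;n)·y′ + 𝒞(x;n)·y = 0, where 𝒜(x;n) = c_n·φ(x)²/(B*(x,n) − c_n·A*(x,n)), ℬ(x;n) = φ(x)·[B(x,n) − B*(x,n) + c_n·(φ′(x) − A(x,n))]/(B*(x,n) − c_n·A*(x,n)) − c_n·φ(x)²·(B*(x,n) − c_n·A*(x,n))′/(B*(x,n) − c_n·A*(x,n))², and 𝒞(x;n) = [A(x,n)·B*(x,n) − B(x,n)·A*(x,n)]/(B*(x,n) − c_n·A*(x,n)) − φ(x)·d/dx[B*(x,n)/(B*(x,n) − c_n·A*(x,n))]. -/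
/-!
Writing `y = p_n^N` and `v = p_{n-1}*`, the connection formula and the three-term recurrence
(which expresses `p_{n-2}*` through `y` and `v`) turn the two structure relations into a
first-order system `φ y' = A* y + D v`, `φ v' = e v + g y` with `D = B* - c_n A*`.
Solving the first equation for `D v`, differentiating and substituting the second eliminates `v`;
the stated equation, multiplied by `D²`, is `c_n` times the resulting polynomial identity.
-/

open Polynomial

section FirstOrderSystem

variable {R : Type*} [CommRing R] {φ y v a d e g : R[X]}

theorem second_order_eq_of_first_order_system
    (hy : φ * derivative y = a * y + d * v) (hv : φ * derivative v = e * v + g * y) :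
    d * φ ^ 2 * derivative (derivative y)
      + (d * φ * (derivative φ - a - e) - φ ^ 2 * derivative d) * derivative y
      + (a * (φ * derivative d + d * e) - d * φ * derivative a - d ^ 2 * g) * y = 0 := by
  have hy' := congrArg derivative hy
  simp only [derivative_mul, derivative_add] at hy'
  linear_combination φ * d * hy' + d ^ 2 * hv - (φ * derivative d + d * e) * hy

end FirstOrderSystem

section Uvarov

variable {K : Type*} [Field K] {c β γ : K} {φ pN ps psm psm2 An Anm Bn Bnm A B : K[X]}

theorem uvarov_first_order_system (hγ : γ ≠ 0)
    (h1 : pN = ps + C c * psm)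
    (h2 : X * psm = ps + C β * psm + C γ * psm2)
    (h3a : φ * derivative ps = An * ps + Bn * psm)
    (h3b : φ * derivative psm = Anm * psm + Bnm * psm2)
    (hA : A = An - C (c / γ) * Bnm)
    (hB : B = Bn + C c * Anm + C (c / γ) * (X - C β) * Bnm) :
    φ * derivative pN = A * pN + (B - C c * A) * psm ∧
      φ * derivative psm
        = (Anm + C γ⁻¹ * (X - C β + C c) * Bnm) * psm + -(C γ⁻¹ * Bnm) * pN := by
  have hγC : C γ⁻¹ * C γ = (1 : K[X]) := by rw [← C_mul, inv_mul_cancel₀ hγ, C_1]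
  rw [div_eq_mul_inv, C_mul] at hA hB
  subst hA hB h1
  constructor
  · rw [derivative_add, derivative_C_mul]
    linear_combination h3a + C c * h3b - C c * C γ⁻¹ * Bnm * h2 - C c * Bnm * psm2 * hγC
  · linear_combination h3b - C γ⁻¹ * Bnm * h2 - Bnm * psm2 * hγC

theorem uvarov_second_order_eq (hγ : γ ≠ 0)
    (h1 : pN = ps + C c * psm)
    (h2 : X * psm = ps + C β * psm + C γ * psm2)
    (h3a : φ * derivative ps = An * ps + Bn * psm)
    (h3b : φ * derivative psm = Anm * psm + Bnm * psm2)
    (hA : A = An - C (c / γ) * Bnm)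
    (hB : B = Bn + C c * Anm + C (c / γ) * (X - C β) * Bnm) :
    C c * φ ^ 2 * (B - C c * A) * derivative (derivative pN)
      + (φ * (Bn - B + C c * (derivative φ - An)) * (B - C c * A)
          - C c * φ ^ 2 * derivative (B - C c * A)) * derivative pN
      + ((An * B - Bn * A) * (B - C c * A)
          - φ * (derivative B * (B - C c * A) - B * derivative (B - C c * A))) * pN = 0 := by
  obtain ⟨hy, hv⟩ := uvarov_first_order_system hγ h1 h2 h3a h3b hA hB
  have hode := second_order_eq_of_first_order_system hy hv
  have hAg : A = An + C c * -(C γ⁻¹ * Bnm) := by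
    rw [hA, div_eq_mul_inv, C_mul]; ring
  have hce : C c * (Anm + C γ⁻¹ * (X - C β + C c) * Bnm) = B - C c * A - Bn + C c * An := by
    rw [hB, hA, div_eq_mul_inv, C_mul]; ring
  have hB' : derivative B = derivative (B - C c * A) + C c * derivative A := by
    rw [derivative_sub, derivative_C_mul]; ring
  generalize hD : B - C c * A = D at *
  -- `c • hode` is the goal once `B = D + c A`, `c e = D - B_n + c A_n` and `A = A_n + c g`.
  linear_combination C c * hode
    + (φ * D * derivative pN - A * D * pN) * hce
    + (-φ * D * derivative pN + φ * derivative D * pN + An * D * pN) * hD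
    - φ * D * pN * hB' - D ^ 2 * pN * hAg

theorem stmt_17_general (c βs γs : ℝ) (hγs : γs ≠ 0)
    (φ pN ps psm psm2 An Anm Bn Bnm : Polynomial ℝ)
    (h1 : pN = ps + C c * psm)
    (h2 : X * psm = ps + C βs * psm + C γs * psm2)
    (h3a : φ * derivative ps = An * ps + Bn * psm)
    (h3b : φ * derivative psm = Anm * psm + Bnm * psm2) :
    let Astar : Polynomial ℝ := An - C (c / γs) * Bnm
    let Bstar : Polynomial ℝ := Bn + C c * Anm + C (c / γs) * (X - C βs) * Bnm
    let D : Polynomial ℝ := Bstar - C c * Astar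
    ∀ x : ℝ, D.eval x ≠ 0 →
      (c * (φ.eval x) ^ 2 / D.eval x) * (derivative (derivative pN)).eval x
      + (φ.eval x * (Bn.eval x - Bstar.eval x
            + c * ((derivative φ).eval x - An.eval x)) / D.eval x
          - c * (φ.eval x) ^ 2 * (derivative D).eval x / (D.eval x) ^ 2)
        * (derivative pN).eval x
      + ((An.eval x * Bstar.eval x - Bn.eval x * Astar.eval x) / D.eval x
          - φ.eval x * deriv (fun t => Bstar.eval t / D.eval t) x)
        * pN.eval x = 0 := by
  intro Astar Bstar D x hD
  have hpoly := congrArg (eval x)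
    (uvarov_second_order_eq hγs h1 h2 h3a h3b (A := Astar) (B := Bstar) rfl rfl)
  have hquot : deriv (fun t => Bstar.eval t / D.eval t) x
      = ((derivative Bstar).eval x * D.eval x - Bstar.eval x * (derivative D).eval x)
          / D.eval x ^ 2 :=
    ((Bstar.hasDerivAt x).div (D.hasDerivAt x) hD).deriv
  rw [hquot]
  simp only [D] at hD ⊢
  simp only [eval_add, eval_sub, eval_mul, eval_pow, eval_C, eval_zero] at hpoly hD ⊢
  field_simp
  linear_combination hpoly

/-- Second-order linear differential equation satisfied by
`y = p_n^N(a;x)`, given the connection formula `p_n^N = p_n* + c_n·p_{n−1}*`, the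
three-term recurrence of the `p_k*`, and the structure relations
`φ·(p_k*)′ = A(·,k)·p_k* + B(·,k)·p_{k−1}*` for `k = n, n−1`.  With
`A* = A(·,n) − (c_n/γ*_{n−1})·B(·,n−1)`,
`B* = B(·,n) + c_n·A(·,n−1) + (c_n/γ*_{n−1})·(x−β*_{n−1})·B(·,n−1)`,
on the set where `B* − c_n·A* ≠ 0` one has `𝒜 y″ + ℬ y′ + 𝒞 y = 0` with the stated
coefficients. -/
theorem stmt_17 (c βs γs : ℝ) (hc : c ≠ 0) (hγs : γs ≠ 0)
    (φ pN ps psm psm2 An Anm Bn Bnm : Polynomial ℝ)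
    (h1 : pN = ps + C c * psm)
    (h2 : X * psm = ps + C βs * psm + C γs * psm2)
    (h3a : φ * derivative ps = An * ps + Bn * psm)
    (h3b : φ * derivative psm = Anm * psm + Bnm * psm2) :
    let Astar : Polynomial ℝ := An - C (c / γs) * Bnm
    let Bstar : Polynomial ℝ := Bn + C c * Anm + C (c / γs) * (X - C βs) * Bnm
    let D : Polynomial ℝ := Bstar - C c * Astar
    ∀ x : ℝ, D.eval x ≠ 0 →
      (c * (φ.eval x) ^ 2 / D.eval x) * (derivative (derivative pN)).eval x
      + (φ.eval x * (Bn.eval x - Bstar.eval x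
            + c * ((derivative φ).eval x - An.eval x)) / D.eval x
          - c * (φ.eval x) ^ 2 * (derivative D).eval x / (D.eval x) ^ 2)
        * (derivative pN).eval x
      + ((An.eval x * Bstar.eval x - Bn.eval x * Astar.eval x) / D.eval x
          - φ.eval x * deriv (fun t => Bstar.eval t / D.eval t) x)
        * pN.eval x = 0 :=
  stmt_17_general c βs γs hγs φ pN ps psm psm2 An Anm Bn Bnm h1 h2 h3a h3b
end Uvarov
end

section
/- Let α > −1, a < 0, and let (p_n*(a;·)) be the MOPS for the measure dμ*(x) = (x−a)·x^α e^{−x} dx on [0,∞). Set a_n = L_{n+1}^α(a)/L_n^α(a). Then the structure relation φ(x)·(p_n*(a;x))′ = A(x,n)·p_n*(a;x) + B(x,n)·p_{n−1}*(a;x) holds, where φ(x) = (x−a)·x, A(x,n) = n·[x − (n+1+a_n)·(1 + (n+α)/a_{n−1})], and B(x,n) = [n(n+α)/a_{n−1}]·[a_n·x − (n+1+a_n)·(n+1+a_n+α)]. -/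
/-!
The monic Laguerre polynomials satisfy the three-term recurrence
`L_{n+2} = (x - (2n + 3 + α)) L_{n+1} - (n + 1)(n + 1 + α) L_n`, and by induction the structure
relation `x L_{n+1}' = (n + 1) L_{n+1} + (n + 1)(n + 1 + α) L_n`. Integrating by parts against the
weight (equivalently, `Γ(s + 1) = s Γ(s)` on the moments) turns the latter into
`∫ L_{n+1} x^m = (m - n) ∫ L_n x^m`, so the recurrence polynomials are orthogonal. Both weights
are positive, and monic orthogonal families for a positive functional are unique; hence the given
families are the recurrence polynomials and the Christoffel kernels
`(L_{n+1} - a_n L_n) / (x - a)`. The claimed relation, multiplied by `x - a`, becomes an identity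
between combinations of `L_{n+1}, L_n, L_{n-1}`, which follows from the recurrence, the structure
relation, and `a_n a_{n-1} = (a - 2n - 1 - α) a_{n-1} - n(n + α)` (the recurrence at `a`).
-/

open MeasureTheory Polynomial Set

namespace Polynomial

theorem apply_eq_zero_of_degree_lt {R M : Type*} [Ring R] [AddCommGroup M] [Module R M]
    (φ : R[X] →ₗ[R] M) {G : ℕ → R[X]} (hG : ∀ k, IsMonicOfDegree (G k) k) :
    ∀ {n : ℕ}, (∀ k < n, φ (G k) = 0) → ∀ {q : R[X]}, q.degree < n → φ q = 0 := by
  intro n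
  induction n with
  | zero =>
    intro _ q hq
    have : q = 0 := by
      ext m
      exact (degree_lt_iff_coeff_zero q 0).mp hq m (Nat.zero_le m)
    rw [this, map_zero]
  | succ n ih =>
    intro hφ q hq
    have hq' : (q - q.coeff n • G n).degree < n := by
      refine (degree_lt_iff_coeff_zero _ n).mpr fun m hm => ?_
      rw [coeff_sub, coeff_smul, smul_eq_mul]
      rcases eq_or_lt_of_le hm with rfl | hlt
      · have hlead := (hG n).monic.coeff_natDegree
        rw [(hG n).natDegree_eq] at hlead
        rw [hlead, mul_one, sub_self]
      · rw [(degree_lt_iff_coeff_zero q (n + 1)).mp hq m hlt,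
          coeff_eq_zero_of_natDegree_lt ((hG n).natDegree_eq.trans_lt hlt), mul_zero, sub_zero]
    have hsplit : q = (q - q.coeff n • G n) + q.coeff n • G n := by abel
    rw [hsplit, map_add, map_smul, ih (fun k hk => hφ k (by omega)) hq', hφ n (by omega),
      smul_zero, add_zero]

theorem eq_of_orthogonal_of_isMonicOfDegree {R : Type*} [CommRing R] (T : R[X] →ₗ[R] R)
    (hT : ∀ p ≠ 0, T (p * p) ≠ 0) {F G : ℕ → R[X]}
    (hFm : ∀ n, IsMonicOfDegree (F n) n) (hGm : ∀ n, IsMonicOfDegree (G n) n)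
    (hF : ∀ m n, m ≠ n → T (F m * F n) = 0) (hG : ∀ m n, m ≠ n → T (G m * G n) = 0)
    (n : ℕ) : F n = G n := by
  induction n using Nat.strong_induction_on with
  | _ n ih =>
    rw [← sub_eq_zero]
    by_contra hd
    have hdeg : (F n - G n).degree < n := (degree_lt_iff_coeff_zero _ n).mpr fun m hm => by
      rw [coeff_sub, (hFm n).coeff_eq (hGm n) hm, sub_self]
    have horth : ∀ k < n, (T ∘ₗ LinearMap.mulLeft R (F n - G n)) (G k) = 0 := fun k hk => by
      rw [LinearMap.comp_apply, LinearMap.mulLeft_apply, sub_mul, map_sub, hG n k hk.ne',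
        ← ih k hk, hF n k hk.ne', sub_zero]
    exact hT _ hd (apply_eq_zero_of_degree_lt _ hGm horth hdeg)

theorem X_mul_derivative_X_pow {R : Type*} [CommSemiring R] (m : ℕ) :
    X * derivative (X ^ m : R[X]) = (m : R[X]) * X ^ m := by
  cases m with
  | zero => simp
  | succ m =>
    rw [derivative_X_pow_succ, map_add, map_natCast, map_one]
    push_cast
    ring

end Polynomial

noncomputable def monicLaguerre (α : ℝ) : ℕ → ℝ[X]
  | 0 => 1
  | 1 => X - C (1 + α)
  | n + 2 => (X - C (2 * n + 3 + α)) * monicLaguerre α (n + 1)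
      - C ((n + 1) * (n + 1 + α)) * monicLaguerre α n

namespace monicLaguerre

variable (α : ℝ)

theorem add_two (n : ℕ) :
    monicLaguerre α (n + 2) = (X - C (2 * n + 3 + α)) * monicLaguerre α (n + 1)
      - C ((n + 1) * (n + 1 + α)) * monicLaguerre α n := by
  rw [monicLaguerre]

theorem isMonicOfDegree (n : ℕ) : IsMonicOfDegree (monicLaguerre α n) n := by
  induction n using Nat.twoStepInduction with
  | zero => simp [monicLaguerre]
  | one => exact isMonicOfDegree_X_sub_one _
  | more n h₀ h₁ =>
    rw [add_two, show n + 2 = 1 + (n + 1) by ring]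
    exact ((isMonicOfDegree_X_sub_one _).mul h₁).sub
      ((natDegree_C_mul_le _ _).trans_lt (by rw [h₀.natDegree_eq]; omega))

theorem X_mul_derivative (n : ℕ) :
    X * derivative (monicLaguerre α (n + 1))
      = C ((n : ℝ) + 1) * monicLaguerre α (n + 1)
        + C (((n : ℝ) + 1) * (n + 1 + α)) * monicLaguerre α n := by
  induction n using Nat.twoStepInduction with
  | zero => simp [monicLaguerre]
  | one =>
    simp only [monicLaguerre, CharP.cast_eq_zero, mul_zero, zero_add, map_add, map_ofNat, map_one,
      one_mul, mul_one, derivative_sub, derivative_mul, derivative_X,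
      derivative_ofNat, derivative_C, add_zero, sub_zero, derivative_one, Nat.cast_one, map_mul]
    ring
  | more n ih₀ ih₁ =>
    have hD := congrArg derivative (add_two α (n + 1))
    have h₁ := add_two α (n + 1)
    have h₀ := add_two α n
    simp only [derivative_sub, derivative_mul, derivative_X, derivative_C, zero_mul,
      sub_zero, one_mul] at hD
    push_cast at *
    simp only [add_assoc, Nat.reduceAdd] at *
    simp only [map_add, map_mul, map_natCast, map_ofNat, map_one] at *
    set N : ℝ[X] := (n : ℝ[X])
    linear_combination X * hD + (X - (2 * (N + 1) + 3 + C α)) * ih₁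
      - ((N + 2) * (N + 2 + C α)) * ih₀ - (N + 3) * h₁ - ((N + 2) * (N + 2 + C α)) * h₀

theorem neg_one_pow_mul_eval_pos {α a : ℝ} (hα : -1 < α) (ha : a < 0) (n : ℕ) :
    0 < (-1) ^ n * (monicLaguerre α n).eval a := by
  let v : ℕ → ℝ := fun n => (-1) ^ n * (monicLaguerre α n).eval a
  have hv : ∀ n : ℕ,
      v (n + 2) = (2 * n + 3 + α - a) * v (n + 1) - (n + 1) * (n + 1 + α) * v n := fun n => by
    simp only [v, add_two, eval_sub, eval_mul, eval_X, eval_C]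
    ring
  suffices h : ∀ n : ℕ, 0 < v n ∧ (n + 1 + α) * v n ≤ v (n + 1) from (h n).1
  intro n
  induction n with
  | zero =>
    simp only [v, pow_zero, monicLaguerre, eval_one, mul_one, zero_lt_one, CharP.cast_eq_zero,
      zero_add, pow_one, eval_sub, eval_X, eval_C, neg_mul, one_mul, neg_sub, le_sub_self_iff,
      true_and]
    exact ha.le
  | succ n ih =>
    obtain ⟨hpos, hle⟩ := ih
    have hcoef : (0 : ℝ) < n + 1 + α := by linarith [(n.cast_nonneg : (0 : ℝ) ≤ n)]
    have hpos' : 0 < v (n + 1) := (mul_pos hcoef hpos).trans_le hle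
    refine ⟨hpos', ?_⟩
    rw [hv]
    push_cast
    nlinarith [mul_le_mul_of_nonneg_left hle (by positivity : (0 : ℝ) ≤ n + 1),
      mul_pos (neg_pos.mpr ha) hpos']

theorem eval_ne_zero_of_neg {α a : ℝ} (hα : -1 < α) (ha : a < 0) (n : ℕ) :
    (monicLaguerre α n).eval a ≠ 0 :=
  right_ne_zero_of_mul (neg_one_pow_mul_eval_pos hα ha n).ne'

end monicLaguerre

theorem exp_neg_mul_rpow_natCast_add_sub_one {x : ℝ} (hx : 0 < x) (α : ℝ) (n : ℕ) :
    Real.exp (-x) * x ^ ((n : ℝ) + α + 1 - 1) = x ^ n * (x ^ α * Real.exp (-x)) := by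
  rw [add_sub_cancel_right, Real.rpow_add hx, Real.rpow_natCast]
  ring

theorem integrableOn_eval_mul_rpow_mul_exp {α : ℝ} (hα : -1 < α) (p : ℝ[X]) :
    IntegrableOn (fun x => p.eval x * (x ^ α * Real.exp (-x))) (Ioi 0) := by
  induction p using Polynomial.induction_on' with
  | add p q hp hq =>
    simp only [eval_add, add_mul]
    exact hp.add hq
  | monomial n c =>
    have hΓ := Real.GammaIntegral_convergent (s := n + α + 1)
      (by linarith [(n.cast_nonneg : (0 : ℝ) ≤ n)])
    refine IntegrableOn.congr_fun (hΓ.const_mul c) (fun x hx => ?_) measurableSet_Ioi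
    rw [eval_monomial, exp_neg_mul_rpow_natCast_add_sub_one hx, mul_assoc]

noncomputable def laguerreFunctional {α : ℝ} (hα : -1 < α) : ℝ[X] →ₗ[ℝ] ℝ where
  toFun p := ∫ x in Ioi 0, p.eval x * (x ^ α * Real.exp (-x))
  map_add' p q := by
    simp only [eval_add, add_mul]
    exact integral_add (integrableOn_eval_mul_rpow_mul_exp hα p)
      (integrableOn_eval_mul_rpow_mul_exp hα q)
  map_smul' c p := by
    simp only [eval_smul, smul_eq_mul, mul_assoc, RingHom.id_apply]
    exact integral_const_mul c _

namespace laguerreFunctional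

variable {α : ℝ} (hα : -1 < α)

theorem apply (p : ℝ[X]) :
    laguerreFunctional hα p = ∫ x in Ioi 0, p.eval x * (x ^ α * Real.exp (-x)) := rfl

theorem X_pow (n : ℕ) : laguerreFunctional hα (X ^ n) = Real.Gamma (n + α + 1) := by
  rw [Real.Gamma_eq_integral (by linarith [(n.cast_nonneg : (0 : ℝ) ≤ n)]), apply]
  refine setIntegral_congr_fun measurableSet_Ioi fun x hx => ?_
  rw [eval_pow, eval_X, exp_neg_mul_rpow_natCast_add_sub_one hx]

theorem X_pow_succ (n : ℕ) :
    laguerreFunctional hα (X ^ (n + 1)) = (n + α + 1) * laguerreFunctional hα (X ^ n) := by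
  rw [X_pow, X_pow, ← Real.Gamma_add_one (by linarith [(n.cast_nonneg : (0 : ℝ) ≤ n)])]
  congr 1
  push_cast
  ring

theorem C_mul (c : ℝ) (p : ℝ[X]) :
    laguerreFunctional hα (C c * p) = c * laguerreFunctional hα p := by
  rw [C_mul', map_smul, smul_eq_mul]

theorem X_mul_derivative (p : ℝ[X]) :
    laguerreFunctional hα (X * derivative p)
      = laguerreFunctional hα (X * p) - (α + 1) * laguerreFunctional hα p := by
  induction p using Polynomial.induction_on' with
  | add p q hp hq =>
    simp only [mul_add, map_add, hp, hq]
    ring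
  | monomial n c =>
    rw [← smul_X_eq_monomial, derivative_smul, mul_smul_comm, mul_smul_comm, map_smul,
      map_smul, map_smul, smul_eq_mul, smul_eq_mul, smul_eq_mul, ← pow_succ', X_pow_succ]
    cases n with
    | zero =>
      simp only [pow_zero, derivative_one, mul_zero, map_zero, CharP.cast_eq_zero, zero_add]
      ring
    | succ n =>
      rw [derivative_X_pow, ← mul_assoc, mul_comm X, mul_assoc, ← pow_succ', C_mul]
      push_cast
      ring

theorem monicLaguerre_succ_mul_X_pow (n m : ℕ) :
    laguerreFunctional hα (monicLaguerre α (n + 1) * X ^ m)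
      = (m - n) * laguerreFunctional hα (monicLaguerre α n * X ^ m) := by
  cases n with
  | zero =>
    simp only [monicLaguerre, sub_mul, ← pow_succ', map_sub, C_mul, X_pow_succ, one_mul]
    push_cast
    ring
  | succ n =>
    have hEuler : X * derivative (monicLaguerre α (n + 1) * X ^ m)
        = C ((n : ℝ) + 1 + m) * (monicLaguerre α (n + 1) * X ^ m)
          + C (((n : ℝ) + 1) * (n + 1 + α)) * (monicLaguerre α n * X ^ m) := by
      rw [derivative_mul, mul_add, ← mul_assoc, monicLaguerre.X_mul_derivative,
        mul_left_comm, X_mul_derivative_X_pow]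
      simp only [map_add, map_mul, map_natCast, map_one]
      ring
    have hibp := X_mul_derivative hα (monicLaguerre α (n + 1) * X ^ m)
    rw [hEuler, map_add, C_mul, C_mul, mul_left_comm, ← pow_succ'] at hibp
    have httr : monicLaguerre α (n + 2) * X ^ m
        = monicLaguerre α (n + 1) * X ^ (m + 1)
          - C (2 * (n : ℝ) + 3 + α) * (monicLaguerre α (n + 1) * X ^ m)
          - C (((n : ℝ) + 1) * (n + 1 + α)) * (monicLaguerre α n * X ^ m) := by
      rw [monicLaguerre.add_two]
      ring
    rw [httr, map_sub, map_sub, C_mul, C_mul]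
    push_cast
    linarith

theorem monicLaguerre_mul_X_pow_of_lt {m n : ℕ} (h : m < n) :
    laguerreFunctional hα (monicLaguerre α n * X ^ m) = 0 := by
  induction n with
  | zero => omega
  | succ n ih =>
    rw [monicLaguerre_succ_mul_X_pow]
    rcases (Nat.lt_succ_iff.mp h).lt_or_eq with h | rfl
    · rw [ih h, mul_zero]
    · rw [sub_self, zero_mul]

theorem monicLaguerre_mul_of_degree_lt {n : ℕ} {q : ℝ[X]} (hq : q.degree < n) :
    laguerreFunctional hα (monicLaguerre α n * q) = 0 :=
  apply_eq_zero_of_degree_lt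
    (laguerreFunctional hα ∘ₗ LinearMap.mulLeft ℝ (monicLaguerre α n))
    (isMonicOfDegree_X_pow ℝ) (fun _ hk => monicLaguerre_mul_X_pow_of_lt hα hk) hq

theorem monicLaguerre_mul_monicLaguerre {m n : ℕ} (h : m ≠ n) :
    laguerreFunctional hα (monicLaguerre α m * monicLaguerre α n) = 0 := by
  rcases h.lt_or_gt with h | h
  · rw [mul_comm]
    exact monicLaguerre_mul_of_degree_lt hα <| (degree_le_of_natDegree_le
      (monicLaguerre.isMonicOfDegree α m).natDegree_eq.le).trans_lt (by exact_mod_cast h)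
  · exact monicLaguerre_mul_of_degree_lt hα <| (degree_le_of_natDegree_le
      (monicLaguerre.isMonicOfDegree α n).natDegree_eq.le).trans_lt (by exact_mod_cast h)

theorem pos {q : ℝ[X]} (hq0 : q ≠ 0) (hq : ∀ x, 0 < x → 0 ≤ q.eval x) :
    0 < laguerreFunctional hα q := by
  rw [apply, setIntegral_pos_iff_support_of_nonneg_ae _ (integrableOn_eval_mul_rpow_mul_exp hα q)]
  · have hsub : Ioi 0 \ {x | q.IsRoot x}
        ⊆ Function.support (fun x => q.eval x * (x ^ α * Real.exp (-x))) ∩ Ioi 0 :=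
      fun x ⟨(hx : 0 < x), hroot⟩ => ⟨mul_ne_zero hroot (by positivity), hx⟩
    refine lt_of_lt_of_le ?_ (measure_mono hsub)
    rw [measure_sdiff_null ((finite_setOfPred_isRoot hq0).measure_zero _), Real.volume_Ioi]
    exact ENNReal.zero_lt_top
  · filter_upwards [ae_restrict_mem measurableSet_Ioi] with x (hx : 0 < x)
    exact mul_nonneg (hq x hx) (by positivity)

end laguerreFunctional

noncomputable def laguerreRatio (α a : ℝ) (n : ℕ) : ℝ :=
  (monicLaguerre α (n + 1)).eval a / (monicLaguerre α n).eval a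

noncomputable def laguerreKernel (α a : ℝ) (n : ℕ) : ℝ[X] :=
  (monicLaguerre α (n + 1) - C (laguerreRatio α a n) * monicLaguerre α n) /ₘ (X - C a)

noncomputable def christoffelFunctional {α : ℝ} (hα : -1 < α) (a : ℝ) :
    ℝ[X] →ₗ[ℝ] ℝ :=
  laguerreFunctional hα ∘ₗ LinearMap.mulLeft ℝ (X - C a)

theorem christoffelFunctional.apply {α : ℝ} (hα : -1 < α) (a : ℝ) (p : ℝ[X]) :
    christoffelFunctional hα a p = laguerreFunctional hα ((X - C a) * p) := rfl

theorem christoffelFunctional.mul_self_pos {α a : ℝ} (hα : -1 < α) (ha : a ≤ 0) {p : ℝ[X]}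
    (hp : p ≠ 0) : 0 < christoffelFunctional hα a (p * p) := by
  rw [christoffelFunctional.apply]
  refine laguerreFunctional.pos hα (mul_ne_zero (X_sub_C_ne_zero a) (mul_ne_zero hp hp))
    fun x hx => ?_
  rw [eval_mul, eval_mul, eval_sub, eval_X, eval_C]
  exact mul_nonneg (by linarith) (mul_self_nonneg _)

section Kernel

variable {α a : ℝ} (ha : ∀ n, (monicLaguerre α n).eval a ≠ 0)
include ha

theorem laguerreRatio_succ_mul (n : ℕ) :
    laguerreRatio α a (n + 1) * laguerreRatio α a n
      = (a - (2 * n + 3 + α)) * laguerreRatio α a n - (n + 1) * (n + 1 + α) := by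
  have httr := congrArg (eval a) (monicLaguerre.add_two α n)
  simp only [eval_sub, eval_mul, eval_X, eval_C] at httr
  unfold laguerreRatio
  field_simp [ha n, ha (n + 1)]
  linear_combination httr

theorem X_sub_C_mul_laguerreKernel (n : ℕ) :
    (X - C a) * laguerreKernel α a n
      = monicLaguerre α (n + 1) - C (laguerreRatio α a n) * monicLaguerre α n := by
  refine mul_divByMonic_eq_iff_isRoot.mpr ?_
  rw [IsRoot, eval_sub, eval_mul, eval_C, laguerreRatio, div_mul_cancel₀ _ (ha n), sub_self]

theorem isMonicOfDegree_laguerreKernel (n : ℕ) : IsMonicOfDegree (laguerreKernel α a n) n := by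
  have h : IsMonicOfDegree ((X - C a) * laguerreKernel α a n) (1 + n) := by
    rw [X_sub_C_mul_laguerreKernel ha, add_comm 1 n]
    exact (monicLaguerre.isMonicOfDegree α (n + 1)).sub
      ((natDegree_C_mul_le _ _).trans_lt
        (by rw [(monicLaguerre.isMonicOfDegree α n).natDegree_eq]; omega))
  exact (isMonicOfDegree_X_sub_one a).of_mul_left h

theorem christoffelFunctional.laguerreKernel_mul_laguerreKernel (hα : -1 < α) {m n : ℕ}
    (h : m ≠ n) :
    christoffelFunctional hα a (laguerreKernel α a m * laguerreKernel α a n) = 0 := by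
  wlog hlt : m < n generalizing m n
  · rw [mul_comm]
    exact this h.symm (h.symm.lt_of_le (not_lt.mp hlt))
  have hdeg : (laguerreKernel α a m).degree < n :=
    (degree_le_of_natDegree_le (isMonicOfDegree_laguerreKernel ha m).natDegree_eq.le).trans_lt
      (by exact_mod_cast hlt)
  have hsplit : (X - C a) * (laguerreKernel α a m * laguerreKernel α a n)
      = monicLaguerre α (n + 1) * laguerreKernel α a m
        - C (laguerreRatio α a n) * (monicLaguerre α n * laguerreKernel α a m) := by
    rw [mul_left_comm, X_sub_C_mul_laguerreKernel ha]
    ring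
  rw [christoffelFunctional.apply, hsplit, map_sub, laguerreFunctional.C_mul,
    laguerreFunctional.monicLaguerre_mul_of_degree_lt hα
      (hdeg.trans (by exact_mod_cast n.lt_succ_self)),
    laguerreFunctional.monicLaguerre_mul_of_degree_lt hα hdeg, mul_zero, sub_zero]

theorem laguerreKernel_structure_relation {n : ℕ} (hn : 1 ≤ n) :
    ((X - C a) * X) * derivative (laguerreKernel α a n)
      = (C (n : ℝ) * (X - C ((n + 1 + laguerreRatio α a n)
          * (1 + (n + α) / laguerreRatio α a (n - 1))))) * laguerreKernel α a n
        + (C (n * (n + α) / laguerreRatio α a (n - 1))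
            * (C (laguerreRatio α a n) * X - C ((n + 1 + laguerreRatio α a n)
              * (n + 1 + laguerreRatio α a n + α)))) * laguerreKernel α a (n - 1) := by
  obtain ⟨n, rfl⟩ : ∃ k, n = k + 1 := ⟨n - 1, by omega⟩
  rw [Nat.add_sub_cancel]
  have hs : laguerreRatio α a n ≠ 0 := div_ne_zero (ha (n + 1)) (ha n)
  have hrs := laguerreRatio_succ_mul ha n
  have hQ₁ := X_sub_C_mul_laguerreKernel ha (n + 1)
  have hQ₀ := X_sub_C_mul_laguerreKernel ha n
  have hQ' := congrArg derivative hQ₁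
  simp only [derivative_mul, derivative_sub, derivative_X, derivative_C, zero_mul, sub_zero,
    one_mul, zero_add] at hQ'
  have hD₂ := monicLaguerre.X_mul_derivative α (n + 1)
  have hD₁ := monicLaguerre.X_mul_derivative α n
  have hT := monicLaguerre.add_two α n
  generalize laguerreRatio α a (n + 1) = r at *
  generalize laguerreRatio α a n = s at *
  have hk : ((n + 1 : ℕ) : ℝ) * ((n + 1 : ℕ) + α) / s = a - (2 * n + 3 + α) - r := by
    rw [div_eq_iff hs]
    push_cast
    linear_combination hrs
  have hγ : ((n + 1 : ℕ) : ℝ) * (((n + 1 : ℕ) + 1 + r) * (1 + ((n + 1 : ℕ) + α) / s))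
      = (n + 2 + r) * (n + 1 + (a - (2 * n + 3 + α) - r)) := by
    rw [mul_left_comm, mul_add, mul_one, ← mul_div_assoc, hk]
    push_cast
    ring
  rw [hk, mul_sub (C _) X, ← C_mul, hγ]
  refine mul_left_cancel₀ (X_sub_C_ne_zero a) ?_
  -- the `hrs` term is what matches the coefficients of `monicLaguerre α n`
  linear_combination (norm := skip) (X - C a) * X * hQ' + (X - C a) * hD₂
    - (X - C a) * C r * hD₁
    - (X + C ((n + 1 : ℕ) : ℝ) * X
        - C ((n + 2 + r) * (n + 1 + (a - (2 * n + 3 + α) - r)))) * hQ₁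
    - C (a - (2 * n + 3 + α) - r) * (C r * X - C ((n + 2 + r) * (n + 2 + r + α))) * hQ₀
    + C ((n + 2 + r) * (n + 1 + (a - (2 * n + 3 + α) - r)) - (n + 2) * a) * hT
    - (C r * X - C ((n + 2 + r) * (n + 2 + r + α))) * monicLaguerre α n * congrArg C hrs
  simp only [map_add, map_sub, map_mul, map_natCast, map_ofNat, map_one, Nat.cast_add,
    Nat.cast_one]
  ring1

end Kernel

/-- Structure relation for the Christoffel (kernel) polynomials of
the Laguerre weight, for `a < 0`: with `a_n = L_{n+1}^α(a)/L_n^α(a)`,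
`φ(x)·(p_n*(a;x))′ = A(x,n)·p_n*(a;x) + B(x,n)·p_{n−1}*(a;x)` where
`φ(x) = (x−a)x`, `A(x,n) = n[x − (n+1+a_n)(1 + (n+α)/a_{n−1})]`, and
`B(x,n) = (n(n+α)/a_{n−1})·[a_n·x − (n+1+a_n)(n+1+a_n+α)]`. -/
theorem stmt_18 (α : ℝ) (hα : -1 < α) (a : ℝ) (ha : a < 0)
    (L ps : ℕ → Polynomial ℝ)
    (hLm : ∀ m, (L m).Monic) (hLd : ∀ m, (L m).natDegree = m)
    (hLorth : ∀ m k, m ≠ k → ∫ x in Set.Ioi (0 : ℝ),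
      (L m).eval x * (L k).eval x * (x ^ α * Real.exp (-x)) = 0)
    (hpsm : ∀ m, (ps m).Monic) (hpsd : ∀ m, (ps m).natDegree = m)
    (hpsorth : ∀ m k, m ≠ k → ∫ x in Set.Ioi (0 : ℝ),
      (x - a) * ((ps m).eval x * (ps k).eval x) * (x ^ α * Real.exp (-x)) = 0)
    (n : ℕ) (hn : 1 ≤ n) :
    let an : ℕ → ℝ := fun m => (L (m + 1)).eval a / (L m).eval a
    ((X - C a) * X) * derivative (ps n)
      = (C (n : ℝ) * (X - C (((n : ℝ) + 1 + an n) * (1 + ((n : ℝ) + α) / an (n - 1)))))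
          * ps n
        + (C ((n : ℝ) * ((n : ℝ) + α) / an (n - 1))
            * (C (an n) * X
              - C (((n : ℝ) + 1 + an n) * ((n : ℝ) + 1 + an n + α))))
          * ps (n - 1) := by
  have hL : L = monicLaguerre α := funext <|
    eq_of_orthogonal_of_isMonicOfDegree (laguerreFunctional hα)
      (fun p hp => (laguerreFunctional.pos hα (mul_self_ne_zero.mpr hp)
        fun x _ => by rw [eval_mul]; exact mul_self_nonneg _).ne')
      (fun m => ⟨hLd m, hLm m⟩) (monicLaguerre.isMonicOfDegree α)
      (fun m k h => by simpa only [laguerreFunctional.apply, eval_mul] using hLorth m k h)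
      (fun _ _ => laguerreFunctional.monicLaguerre_mul_monicLaguerre hα)
  have hL₀ := monicLaguerre.eval_ne_zero_of_neg hα ha
  have hps : ps = laguerreKernel α a := funext <|
    eq_of_orthogonal_of_isMonicOfDegree (christoffelFunctional hα a)
      (fun p hp => (christoffelFunctional.mul_self_pos hα ha.le hp).ne')
      (fun m => ⟨hpsd m, hpsm m⟩) (isMonicOfDegree_laguerreKernel hL₀)
      (fun m k h => by
        simpa only [christoffelFunctional.apply, laguerreFunctional.apply, eval_mul, eval_sub,
          eval_X, eval_C] using hpsorth m k h)
      (fun _ _ => christoffelFunctional.laguerreKernel_mul_laguerreKernel hL₀ hα)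
  subst hL hps
  exact laguerreKernel_structure_relation hL₀ hn
end
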